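/- Let d ≥ 1, let K : ℝ^d → [0,∞) be a measurable even kernel with ∫_{ℝ^d} K(x)|x| dx < ∞, let p̂ ∈ S^{d−1}, set H := {x ∈ ℝ^d : x·p̂ > 0}, and let δ ∈ (0,1). If E ⊂ ℝ^d is measurable and the symmetric difference E Δ H is contained in the closed ball B_{1−δ} of radius 1−δ centred at the origin, then for every ε > 0, (1/ε)|J²_ε(E;B) − J²_ε(H;B)| ≤ (2/δ) L^d(E Δ H) ∫_{ℝ^d} K(z)|z| dz. -/

import Mathlib

/-!
For `x ∈ B` and `y ∉ B` the point `y` lies outside `E Δ H ⊆ B_{1-δ}`, so the integrands of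
`J²_ε(E;B)` and `J²_ε(H;B)` differ only when `x ∈ E Δ H`, and then by at most `K_ε(y - x)`.
For such `x` we have `|y - x| ≥ δ`, hence `K_ε(y - x) ≤ δ⁻¹ K_ε(y - x) |y - x|`,
and `∫ K_ε(z) |z| dz = ε ∫ K(z) |z| dz` by scaling.
Integrating over `x ∈ E Δ H` gives the bound.
-/

open MeasureTheory Topology Filter RealInnerProductSpace

/-- Euclidean space `ℝ^d`. -/
abbrev Ed (d : ℕ) := EuclideanSpace ℝ (Fin d)

/-- The rescaled kernel `K_ε(x) = ε^{−d} K(x/ε)`. -/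
noncomputable def Keps {d : ℕ} (K : Ed d → ℝ) (ε : ℝ) (x : Ed d) : ℝ :=
  (ε ^ d)⁻¹ * K (ε⁻¹ • x)

/-- The interaction energy
`J²_ε(E；B) = ∫_B∫_{B^c} K_ε(y−x)|χ_E(y)−χ_E(x)| dy dx`, `B` the unit ball. -/
noncomputable def J2eps {d : ℕ} (K : Ed d → ℝ) (ε : ℝ) (E : Set (Ed d)) : ℝ :=
  ∫ x in Metric.ball (0 : Ed d) 1, ∫ y in (Metric.ball (0 : Ed d) 1)ᶜ,
    Keps K ε (y - x) * |E.indicator (fun _ => (1 : ℝ)) y - E.indicator (fun _ => (1 : ℝ)) x|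

open scoped symmDiff

section Integral

variable {α : Type*} [MeasurableSpace α] {μ : Measure α}

theorem abs_integral_sub_integral_le {f g h : α → ℝ}
    (hfg : AEStronglyMeasurable (fun x => f x - g x) μ) (hh : Integrable h μ)
    (hle : ∀ᵐ x ∂μ, |f x - g x| ≤ h x) :
    |∫ x, f x ∂μ - ∫ x, g x ∂μ| ≤ ∫ x, h x ∂μ := by
  have hfg_int : Integrable (fun x => f x - g x) μ :=
    hh.mono' hfg (by simpa only [Real.norm_eq_abs] using hle)
  by_cases hf : Integrable f μ
  · have hg : Integrable g μ := (hf.sub hfg_int).congr (.of_forall fun x => sub_sub_cancel _ _)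
    rw [← integral_sub hf hg]
    exact abs_integral_le_integral_abs.trans (integral_mono_ae hfg_int.abs hh hle)
  · -- then `g` is not integrable either, and both integrals are the junk value `0`
    have hg : ¬ Integrable g μ := fun hg =>
      hf ((hfg_int.add hg).congr (.of_forall fun x => sub_add_cancel _ _))
    rw [integral_undef hf, integral_undef hg, sub_zero, abs_zero]
    exact integral_nonneg_of_ae (hle.mono fun x hx => (abs_nonneg _).trans hx)

end Integral

theorem abs_mul_abs_indicator_sub_sub_le {α : Type*} {E H : Set α} {x y : α} (hy : y ∉ E ∆ H)
    {k : ℝ} (hk : 0 ≤ k) :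
    |(k * |E.indicator (fun _ => (1 : ℝ)) y - E.indicator (fun _ => 1) x|)
        - (k * |H.indicator (fun _ => (1 : ℝ)) y - H.indicator (fun _ => 1) x|)|
      ≤ k * (E ∆ H).indicator (fun _ => (1 : ℝ)) x := by
  have hyEH : E.indicator (fun _ => (1 : ℝ)) y = H.indicator (fun _ => 1) y := by
    have := Set.abs_indicator_symmDiff E H (fun _ => (1 : ℝ)) y
    rwa [Set.indicator_of_notMem hy, abs_zero, eq_comm, abs_eq_zero, sub_eq_zero] at this
  have hxEH : (E ∆ H).indicator (fun _ => (1 : ℝ)) x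
      = |E.indicator (fun _ => 1) x - H.indicator (fun _ => 1) x| := by
    rw [← Set.abs_indicator_symmDiff, abs_of_nonneg (Set.indicator_nonneg (by simp) x)]
  rw [← mul_sub, abs_mul, abs_of_nonneg hk, hxEH, hyEH]
  refine mul_le_mul_of_nonneg_left ?_ hk
  calc _ ≤ |(H.indicator (fun _ => (1 : ℝ)) y - E.indicator (fun _ => 1) x)
          - (H.indicator (fun _ => 1) y - H.indicator (fun _ => 1) x)| :=
        abs_abs_sub_abs_le_abs_sub _ _
    _ = _ := by rw [abs_sub_comm]; ring_nf

section Kernel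

variable {d : ℕ} {K : Ed d → ℝ} {ε : ℝ}

theorem Keps_nonneg (hK : ∀ x, 0 ≤ K x) (hε : 0 ≤ ε) (x : Ed d) : 0 ≤ Keps K ε x :=
  mul_nonneg (inv_nonneg.2 (pow_nonneg hε _)) (hK _)

theorem measurable_Keps (hK : Measurable K) : Measurable (Keps K ε) :=
  measurable_const.mul (hK.comp (measurable_const_smul ε⁻¹))

theorem Keps_mul_norm (hε : ε ≠ 0) (z : Ed d) :
    Keps K ε z * ‖z‖ = ((ε ^ d)⁻¹ * |ε|) * (K (ε⁻¹ • z) * ‖ε⁻¹ • z‖) := by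
  rw [Keps, norm_smul, Real.norm_eq_abs, abs_inv]
  field_simp

theorem integrable_Keps_mul_norm (hK : Integrable (fun x : Ed d => K x * ‖x‖))
    (hε : ε ≠ 0) :
    Integrable (fun z : Ed d => Keps K ε z * ‖z‖) := by
  have hscaled := (integrable_comp_smul_iff volume (fun x : Ed d => K x * ‖x‖)
    (inv_ne_zero hε)).2 hK
  simpa only [Keps_mul_norm hε] using hscaled.const_mul ((ε ^ d)⁻¹ * |ε|)

theorem integral_Keps_mul_norm (hε : 0 < ε) :
    ∫ z : Ed d, Keps K ε z * ‖z‖ = ε * ∫ z : Ed d, K z * ‖z‖ := by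
  simp only [Keps_mul_norm hε.ne']
  rw [integral_const_mul, Measure.integral_comp_inv_smul_of_nonneg volume
    (fun x : Ed d => K x * ‖x‖) hε.le, finrank_euclideanSpace_fin, smul_eq_mul,
    abs_of_pos hε]
  field_simp

theorem measurable_J2eps_integrand (hK : Measurable K) {A : Set (Ed d)} (hA : MeasurableSet A) :
    Measurable (Function.uncurry fun x y : Ed d =>
      Keps K ε (y - x) * |A.indicator (fun _ => (1 : ℝ)) y - A.indicator (fun _ => 1) x|) := by
  have hχ : Measurable (A.indicator fun _ : Ed d => (1 : ℝ)) :=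
    measurable_const.indicator hA
  exact ((measurable_Keps hK).comp (measurable_snd.sub measurable_fst)).mul
    ((hχ.comp measurable_snd).sub (hχ.comp measurable_fst)).abs

theorem abs_J2eps_integrand_sub_le (hKnonneg : ∀ x, 0 ≤ K x) (hε : 0 ≤ ε) {δ : ℝ}
    (hδ : 0 < δ) {E H : Set (Ed d)} (hEH : E ∆ H ⊆ Metric.closedBall 0 (1 - δ)) {x y : Ed d}
    (hy : 1 ≤ ‖y‖) :
    |(Keps K ε (y - x) * |E.indicator (fun _ => (1 : ℝ)) y - E.indicator (fun _ => 1) x|)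
        - (Keps K ε (y - x) * |H.indicator (fun _ => (1 : ℝ)) y - H.indicator (fun _ => 1) x|)|
      ≤ (E ∆ H).indicator (fun _ => δ⁻¹) x * (Keps K ε (y - x) * ‖y - x‖) := by
  have hmem : ∀ z ∈ E ∆ H, ‖z‖ ≤ 1 - δ := fun z hz => by simpa using hEH hz
  have hyS : y ∉ E ∆ H := fun hyS => by linarith [hmem y hyS]
  have hk := Keps_nonneg hKnonneg hε (y - x)
  refine (abs_mul_abs_indicator_sub_sub_le hyS hk).trans ?_
  by_cases hxS : x ∈ E ∆ H
  · have hxy : δ ≤ ‖y - x‖ := by linarith [hmem x hxS, norm_sub_norm_le y x]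
    rw [Set.indicator_of_mem hxS, Set.indicator_of_mem hxS, mul_one, inv_mul_eq_div,
      le_div_iff₀ hδ]
    exact mul_le_mul_of_nonneg_left hxy hk
  · rw [Set.indicator_of_notMem hxS, Set.indicator_of_notMem hxS, mul_zero, zero_mul]

theorem abs_integral_compl_ball_sub_le (hKmeas : Measurable K) (hKnonneg : ∀ x, 0 ≤ K x)
    (hKsum : Integrable (fun x : Ed d => K x * ‖x‖)) (hε : 0 < ε) {δ : ℝ} (hδ : 0 < δ)
    {E H : Set (Ed d)} (hE : MeasurableSet E) (hH : MeasurableSet H)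
    (hEH : E ∆ H ⊆ Metric.closedBall 0 (1 - δ)) (x : Ed d) :
    |(∫ y in (Metric.ball (0 : Ed d) 1)ᶜ,
          Keps K ε (y - x) * |E.indicator (fun _ => (1 : ℝ)) y - E.indicator (fun _ => 1) x|)
        - (∫ y in (Metric.ball (0 : Ed d) 1)ᶜ,
          Keps K ε (y - x) * |H.indicator (fun _ => (1 : ℝ)) y - H.indicator (fun _ => 1) x|)|
      ≤ (E ∆ H).indicator (fun _ => δ⁻¹ * (ε * ∫ z : Ed d, K z * ‖z‖)) x := by
  set χ := (E ∆ H).indicator (fun _ => δ⁻¹) x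
  have hint : Integrable (fun y => Keps K ε (y - x) * ‖y - x‖) :=
    (integrable_Keps_mul_norm hKsum hε.ne').comp_sub_right x
  have hmeas (A : Set (Ed d)) (hA : MeasurableSet A) :=
    (measurable_J2eps_integrand (ε := ε) hKmeas hA).comp (measurable_prodMk_left (x := x))
  calc _ ≤ ∫ y in (Metric.ball (0 : Ed d) 1)ᶜ, χ * (Keps K ε (y - x) * ‖y - x‖) := by
        refine abs_integral_sub_integral_le ((hmeas E hE).sub (hmeas H hH)).aestronglyMeasurable
          (hint.const_mul _).restrict ?_
        filter_upwards [ae_restrict_mem measurableSet_ball.compl] with y hy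
        exact abs_J2eps_integrand_sub_le hKnonneg hε.le hδ hEH (by simpa using hy)
    _ = χ * ∫ y in (Metric.ball (0 : Ed d) 1)ᶜ, Keps K ε (y - x) * ‖y - x‖ :=
        integral_const_mul _ _
    _ ≤ χ * (ε * ∫ z : Ed d, K z * ‖z‖) := by
        refine mul_le_mul_of_nonneg_left ?_ (Set.indicator_nonneg (fun _ _ => by positivity) x)
        refine (setIntegral_le_integral hint (.of_forall fun y =>
          mul_nonneg (Keps_nonneg hKnonneg hε.le _) (norm_nonneg _))).trans_eq ?_
        rw [integral_sub_right_eq_self (fun z => Keps K ε z * ‖z‖) x,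
          integral_Keps_mul_norm hε]
    _ = _ := by by_cases hxS : x ∈ E ∆ H <;> simp [χ, hxS]

theorem abs_J2eps_sub_le (hKmeas : Measurable K) (hKnonneg : ∀ x, 0 ≤ K x)
    (hKsum : Integrable (fun x : Ed d => K x * ‖x‖)) (hε : 0 < ε) {δ : ℝ} (hδ : 0 < δ)
    {E H : Set (Ed d)} (hE : MeasurableSet E) (hH : MeasurableSet H)
    (hEH : E ∆ H ⊆ Metric.closedBall 0 (1 - δ)) :
    |J2eps K ε E - J2eps K ε H|
      ≤ δ⁻¹ * (ε * ∫ z : Ed d, K z * ‖z‖) * volume.real (E ∆ H) := by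
  set c := δ⁻¹ * (ε * ∫ z : Ed d, K z * ‖z‖)
  have hS : MeasurableSet (E ∆ H) := hE.symmDiff hH
  have hc : 0 ≤ c := mul_nonneg (inv_nonneg.2 hδ.le) (mul_nonneg hε.le
    (integral_nonneg fun z => mul_nonneg (hKnonneg z) (norm_nonneg z)))
  have hint : Integrable ((E ∆ H).indicator fun _ => c) :=
    (integrable_indicator_iff hS).2 (integrableOn_const
      ((measure_mono hEH).trans_lt measure_closedBall_lt_top).ne)
  calc _ ≤ ∫ x in Metric.ball (0 : Ed d) 1, (E ∆ H).indicator (fun _ => c) x := by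
        refine abs_integral_sub_integral_le ?_ hint.restrict (.of_forall
          (abs_integral_compl_ball_sub_le hKmeas hKnonneg hKsum hε hδ hE hH hEH))
        have hmeas (A : Set (Ed d)) (hA : MeasurableSet A) :=
          (measurable_J2eps_integrand (ε := ε) hKmeas hA).stronglyMeasurable.integral_prod_right
            (ν := volume.restrict (Metric.ball (0 : Ed d) 1)ᶜ)
        exact ((hmeas E hE).sub (hmeas H hH)).aestronglyMeasurable
    _ ≤ ∫ x, (E ∆ H).indicator (fun _ => c) x :=
        setIntegral_le_integral hint (.of_forall (Set.indicator_nonneg fun _ _ => hc))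
    _ = c * volume.real (E ∆ H) := by
        rw [integral_indicator_const _ hS, smul_eq_mul, mul_comm]

end Kernel

theorem J2eps_diff_le_general
    {d : ℕ}
    (K : Ed d → ℝ) (hKmeas : Measurable K) (hKnonneg : ∀ x, 0 ≤ K x)
    (hKsum : Integrable (fun x : Ed d => K x * ‖x‖))
    (p : Ed d)
    (δ : ℝ) (hδ : δ ∈ Set.Ioo (0 : ℝ) 1)
    (E : Set (Ed d)) (hE : MeasurableSet E)
    (hEH : symmDiff E {x : Ed d | 0 < ⟪x, p⟫} ⊆ Metric.closedBall (0 : Ed d) (1 - δ))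
    (ε : ℝ) (hε : 0 < ε) :
    (1 / ε) * |J2eps K ε E - J2eps K ε {x : Ed d | 0 < ⟪x, p⟫}| ≤
      (2 / δ) * (volume (symmDiff E {x : Ed d | 0 < ⟪x, p⟫})).toReal *
        ∫ z : Ed d, K z * ‖z‖ := by
  have hH : MeasurableSet {x : Ed d | 0 < ⟪x, p⟫} :=
    measurableSet_lt measurable_const (by fun_prop)
  have hC : 0 ≤ ∫ z : Ed d, K z * ‖z‖ :=
    integral_nonneg fun z => mul_nonneg (hKnonneg z) (norm_nonneg z)
  have hδ_le : δ⁻¹ ≤ 2 / δ := by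
    rw [div_eq_mul_inv]
    linarith [inv_pos.2 hδ.1]
  calc _ ≤ (1 / ε) * (δ⁻¹ * (ε * ∫ z : Ed d, K z * ‖z‖)
          * volume.real (symmDiff E {x : Ed d | 0 < ⟪x, p⟫})) := by
        gcongr
        exact abs_J2eps_sub_le hKmeas hKnonneg hKsum hε hδ.1 hE hH hEH
    _ = δ⁻¹ * (volume (symmDiff E {x : Ed d | 0 < ⟪x, p⟫})).toReal
          * ∫ z : Ed d, K z * ‖z‖ := by
        rw [measureReal_def]
        field_simp
    _ ≤ _ := by gcongr

/-- If `E` coincides with the halfspace `H` outside the closed ball of radius `1−δ`, then the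
exterior interaction energies of `E` and `H` differ by at most
`(2ε/δ) L^d(E Δ H) ∫ K(z)|z| dz`. -/
theorem J2eps_diff_le
    {d : ℕ} (hd : 1 ≤ d)
    (K : Ed d → ℝ) (hKmeas : Measurable K) (hKnonneg : ∀ x, 0 ≤ K x)
    (hKeven : ∀ᵐ x ∂(volume : Measure (Ed d)), K (-x) = K x)
    (hKsum : Integrable (fun x : Ed d => K x * ‖x‖))
    (p : Ed d) (hp : ‖p‖ = 1)
    (δ : ℝ) (hδ : δ ∈ Set.Ioo (0 : ℝ) 1)
    (E : Set (Ed d)) (hE : MeasurableSet E)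
    (hEH : symmDiff E {x : Ed d | 0 < ⟪x, p⟫} ⊆ Metric.closedBall (0 : Ed d) (1 - δ))
    (ε : ℝ) (hε : 0 < ε) :
    (1 / ε) * |J2eps K ε E - J2eps K ε {x : Ed d | 0 < ⟪x, p⟫}| ≤
      (2 / δ) * (volume (symmDiff E {x : Ed d | 0 < ⟪x, p⟫})).toReal *
        ∫ z : Ed d, K z * ‖z‖ :=
  J2eps_diff_le_general K hKmeas hKnonneg hKsum p δ hδ E hE hEH ε hε
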